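/- arXiv:1604.02728 — 5 statements merged into one kernel-verified Lean document; each statement's English description precedes it below -/
import Mathlib

section
/- Arc fiber of the A₂ singularity: Let k be an algebraically closed field of characteristic zero and let f = x·y − z³ ∈ MvPolynomial (Fin 3) k, where the three variables are denoted x, y, z. Let A be the arc-fiber algebra at the origin, i.e. the quotient of the arc algebra A∞((f)) by the ideal generated by the images of the variables x^{(0)}, y^{(0)}, z^{(0)}. Then PrimeSpectrum A has exactly two irreducible components. -/
open MvPolynomial

/-- The universal arc `e : k[x_1,…,x_n] → (k[x_j^{(i)}])[[t]]`, sending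
`x_j` to `Σ_{i ≥ 0} x_j^{(i)} t^i`. -/
noncomputable def univArc (k : Type*) [CommRing k] (n : ℕ) :
    MvPolynomial (Fin n) k →ₐ[k] PowerSeries (MvPolynomial (Fin n × ℕ) k) :=
  MvPolynomial.aeval fun j => PowerSeries.mk fun i => MvPolynomial.X (j, i)

/-- The ideal of the arc space of `V(I)`: generated by all `t`-coefficients of `e f`, `f ∈ I`. -/
noncomputable def arcIdeal {k : Type*} [CommRing k] {n : ℕ}
    (I : Ideal (MvPolynomial (Fin n) k)) : Ideal (MvPolynomial (Fin n × ℕ) k) :=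
  Ideal.span {g | ∃ f ∈ I, ∃ i : ℕ, g = PowerSeries.coeff i (univArc k n f)}

/-- The arc algebra `A∞(I)`. -/
noncomputable abbrev ArcAlgebra {k : Type*} [CommRing k] {n : ℕ}
    (I : Ideal (MvPolynomial (Fin n) k)) : Type _ :=
  MvPolynomial (Fin n × ℕ) k ⧸ arcIdeal I

/-- The map `σ : k[x_1,…,x_n] → k[x_j^{(i)}]` recording the initial point of an arc. -/
noncomputable def initialPoint (k : Type*) [CommRing k] (n : ℕ) :
    MvPolynomial (Fin n) k →ₐ[k] MvPolynomial (Fin n × ℕ) k :=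
  MvPolynomial.aeval fun j => MvPolynomial.X (j, 0)

/-!
An arc through the origin of `xy = z³` with coefficients in a field `L` is a triple
`(x, y, z)` in `t·L⟦t⟧` with `xy = z³`. As `L⟦t⟧` is a valuation ring, either `x ∣ z`, and then
`(x, y, z) = (a, a²b³, ab)`; or `y ∣ z`, and symmetrically `(x, y, z) = (a²b³, a, ab)`; or `z`
divides both `x` and `y`, and then `(x, y, z) = (u²w, uw², uw)` with `w(0) = 0`. Each family is
the image of a generic arc over a polynomial ring, whose kernel is a prime ideal. The third
family lies in the closure of the first, because `(u²w, uw², uw) = (a, a²b³, ab)` for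
`a = u²w`, `b = u⁻¹` as soon as `u` is invertible. The kernels of the first two generic arcs
are incomparable (`y⁽¹⁾` vanishes on the first family and not on the second), so they are
the two minimal primes of the arc fiber.
-/

open MvPolynomial
open scoped PowerSeries

noncomputable section

lemma ncard_irreducibleComponents_eq_ncard_minimalPrimes_ker {R S : Type*} [CommRing R]
    [CommRing S] {f : R →+* S} (hf : Function.Surjective f) :
    (irreducibleComponents (PrimeSpectrum S)).ncard = (RingHom.ker f).minimalPrimes.ncard := by
  rw [← Set.ncard_congr' (minimalPrimes.equivIrreducibleComponents S).toEquiv,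
    RingHom.ker_eq_comap_bot, Ideal.comap_minimalPrimes_eq_of_surjective hf,
    Set.ncard_image_of_injective _ (Ideal.comap_injective_of_surjective f hf)]

lemma Ideal.minimalPrimes_eq_pair {R : Type*} [CommRing R] {J P₁ P₂ : Ideal R}
    [P₁.IsPrime] [P₂.IsPrime] (h₁ : J ≤ P₁) (h₂ : J ≤ P₂) (h₁₂ : ¬P₁ ≤ P₂) (h₂₁ : ¬P₂ ≤ P₁)
    (h : ∀ Q : Ideal R, Q.IsPrime → J ≤ Q → P₁ ≤ Q ∨ P₂ ≤ Q) :
    J.minimalPrimes = {P₁, P₂} := by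
  ext Q
  constructor
  · rintro ⟨⟨hQ, hJQ⟩, hmin⟩
    rcases h Q hQ hJQ with hle | hle
    · exact Or.inl (le_antisymm (hmin ⟨inferInstance, h₁⟩ hle) hle)
    · exact Or.inr (le_antisymm (hmin ⟨inferInstance, h₂⟩ hle) hle)
  · rintro (rfl | rfl)
    · refine ⟨⟨inferInstance, h₁⟩, fun Q' ⟨hQ', hJQ'⟩ hle => ?_⟩
      exact (h Q' hQ' hJQ').resolve_right fun h' => h₂₁ (h'.trans hle)
    · refine ⟨⟨inferInstance, h₂⟩, fun Q' ⟨hQ', hJQ'⟩ hle => ?_⟩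
      exact (h Q' hQ' hJQ').resolve_left fun h' => h₁₂ (h'.trans hle)

variable {k : Type*} [CommRing k]

section ArcEval

variable {σ : Type*} {T : Type*} [CommRing T] [Algebra k T]

variable (k) in
def genericSeries (j : σ) : (MvPolynomial (σ × ℕ) k)⟦X⟧ :=
  PowerSeries.mk fun i => X (j, i)

-- A `k`-algebra map `k[x_j^{(i)}] → T` is the same as a family of power series over `T`:
-- `x_j^{(i)}` goes to the `i`-th coefficient of the `j`-th series.
def arcEval (s : σ → T⟦X⟧) : MvPolynomial (σ × ℕ) k →ₐ[k] T :=
  aeval fun p => PowerSeries.coeff p.2 (s p.1)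

@[simp]
lemma arcEval_X (s : σ → T⟦X⟧) (j : σ) (i : ℕ) :
    arcEval (k := k) s (X (j, i)) = PowerSeries.coeff i (s j) :=
  aeval_X _ _

@[simp]
lemma map_arcEval_genericSeries (s : σ → T⟦X⟧) (j : σ) :
    PowerSeries.map (arcEval (k := k) s) (genericSeries k j) = s j := by
  ext i
  simp [genericSeries]

lemma comp_arcEval {T' : Type*} [CommRing T'] [Algebra k T'] (ψ : T →ₐ[k] T')
    (s : σ → T⟦X⟧) :
    ψ.comp (arcEval s) = arcEval fun j => PowerSeries.map ψ (s j) := by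
  ext ⟨j, i⟩
  simp

lemma arcEval_map_genericSeries (φ : MvPolynomial (σ × ℕ) k →ₐ[k] T) :
    arcEval (fun j => PowerSeries.map φ (genericSeries k j)) = φ := by
  ext ⟨j, i⟩
  simp [genericSeries]

lemma ker_arcEval_le_ker_arcEval_map {S : Type*} [CommRing S] [Algebra k S] (ψ : S →ₐ[k] T)
    (s : σ → S⟦X⟧) :
    RingHom.ker (arcEval (k := k) s) ≤
      RingHom.ker (arcEval fun j => PowerSeries.map (ψ : S →+* T) (s j)) := by
  intro p hp
  rw [RingHom.mem_ker] at hp ⊢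
  rw [← comp_arcEval, AlgHom.comp_apply, hp, map_zero]

end ArcEval

section ArcIdeal

variable {n : ℕ} {T : Type*} [CommRing T] [Algebra k T]

lemma univArc_eq_aeval_genericSeries : univArc k n = aeval (genericSeries k) := rfl

lemma map_arcEval_univArc (s : Fin n → T⟦X⟧) (f : MvPolynomial (Fin n) k) :
    PowerSeries.map (arcEval (k := k) s) (univArc k n f) = aeval s f := by
  rw [univArc_eq_aeval_genericSeries, ← PowerSeries.mapAlgHom_apply, ← AlgHom.comp_apply,
    comp_aeval]
  simp [PowerSeries.mapAlgHom_apply]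

lemma arcIdeal_le_ker_arcEval_iff (I : Ideal (MvPolynomial (Fin n) k)) (s : Fin n → T⟦X⟧) :
    arcIdeal I ≤ RingHom.ker (arcEval (k := k) s) ↔ I ≤ RingHom.ker (aeval s) := by
  have hcoeff (f : MvPolynomial (Fin n) k) (i : ℕ) :
      arcEval s (PowerSeries.coeff i (univArc k n f)) = PowerSeries.coeff i (aeval s f) := by
    rw [← map_arcEval_univArc, PowerSeries.coeff_map]
    rfl
  rw [arcIdeal, Ideal.span_le]
  constructor
  · intro h f hf
    ext i
    simpa [← hcoeff] using h ⟨f, hf, i, rfl⟩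
  · rintro h _ ⟨f, hf, i, rfl⟩
    simp [hcoeff, (RingHom.mem_ker).mp (h hf)]

def arcFiberIdeal (I : Ideal (MvPolynomial (Fin n) k)) : Ideal (MvPolynomial (Fin n × ℕ) k) :=
  arcIdeal I ⊔ Ideal.span (Set.range fun j => X (j, 0))

lemma arcFiberIdeal_le_ker_arcEval_iff (I : Ideal (MvPolynomial (Fin n) k))
    (s : Fin n → T⟦X⟧) :
    arcFiberIdeal I ≤ RingHom.ker (arcEval (k := k) s) ↔
      I ≤ RingHom.ker (aeval s) ∧ ∀ j, PowerSeries.constantCoeff (s j) = 0 := by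
  rw [arcFiberIdeal, sup_le_iff, arcIdeal_le_ker_arcEval_iff, Ideal.span_le, Set.range_subset_iff]
  simp [← PowerSeries.coeff_zero_eq_constantCoeff]

lemma ker_mk_comp_mk_eq_arcFiberIdeal (I : Ideal (MvPolynomial (Fin n) k)) :
    RingHom.ker ((Ideal.Quotient.mk (Ideal.span {a : ArcAlgebra I |
        ∃ j : Fin n, a = Ideal.Quotient.mk _ (X (j, (0 : ℕ)))})).comp
      (Ideal.Quotient.mk (arcIdeal I))) = arcFiberIdeal I := by
  have hspan : Ideal.span {a : ArcAlgebra I | ∃ j : Fin n, a = Ideal.Quotient.mk _ (X (j, 0))} =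
      (Ideal.span (Set.range fun j : Fin n => (X (j, 0) : MvPolynomial (Fin n × ℕ) k))).map
        (Ideal.Quotient.mk (arcIdeal I)) := by
    rw [Ideal.map_span, ← Set.range_comp]
    congr 1
    ext a
    simp [eq_comm]
  rw [← RingHom.comap_ker, Ideal.mk_ker, hspan,
    Ideal.comap_map_of_surjective' _ Ideal.Quotient.mk_surjective, Ideal.mk_ker, sup_comm,
    arcFiberIdeal]

end ArcIdeal

section Charts

variable {R : Type*} [CommRing R]

def xChart (a b : R) : Fin 3 → R := ![a, a ^ 2 * b ^ 3, a * b]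

def yChart (a b : R) : Fin 3 → R := ![a ^ 2 * b ^ 3, a, a * b]

def zChart (a b : R) : Fin 3 → R := ![a ^ 2 * b, a * b ^ 2, a * b]

lemma zChart_eq_xChart {u u' : R} (h : u * u' = 1) (w : R) :
    zChart u w = xChart (u ^ 2 * w) u' := by
  ext j
  fin_cases j
  · rfl
  · show u * w ^ 2 = (u ^ 2 * w) ^ 2 * u' ^ 3
    linear_combination (-u * w ^ 2 * ((u * u') ^ 2 + u * u' + 1)) * h
  · show u * w = u ^ 2 * w * u'
    linear_combination (-u * w) * h

lemma exists_eq_sq_mul_pow_three_of_dvd [IsDomain R] {x y z : R} (h : x * y = z ^ 3)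
    (hx : x ≠ 0) (hxz : x ∣ z) : ∃ v, y = x ^ 2 * v ^ 3 ∧ z = x * v := by
  obtain ⟨v, rfl⟩ := hxz
  exact ⟨v, mul_left_cancel₀ hx (by linear_combination h), rfl⟩

lemma exists_chart_of_mul_eq_pow_three {L : Type*} [Field L] {x y z : L⟦X⟧}
    (hx : PowerSeries.constantCoeff x = 0) (hy : PowerSeries.constantCoeff y = 0)
    (h : x * y = z ^ 3) :
    (∃ a b, PowerSeries.constantCoeff a = 0 ∧ ![x, y, z] = xChart a b) ∨
    (∃ a b, PowerSeries.constantCoeff a = 0 ∧ ![x, y, z] = yChart a b) ∨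
    (∃ a b, PowerSeries.constantCoeff b = 0 ∧ ![x, y, z] = zChart a b) := by
  by_cases hxz : x ≠ 0 ∧ x ∣ z
  · obtain ⟨v, rfl, rfl⟩ := exists_eq_sq_mul_pow_three_of_dvd h hxz.1 hxz.2
    exact Or.inl ⟨x, v, hx, rfl⟩
  by_cases hyz : y ≠ 0 ∧ y ∣ z
  · obtain ⟨v, rfl, rfl⟩ :=
      exists_eq_sq_mul_pow_three_of_dvd (by rwa [mul_comm]) hyz.1 hyz.2
    exact Or.inr (Or.inl ⟨y, v, hy, rfl⟩)
  refine Or.inr (Or.inr ?_)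
  have dvd_of_not_dvd {t : L⟦X⟧} (ht : ¬(t ≠ 0 ∧ t ∣ z)) : z ∣ t := by
    rcases eq_or_ne t 0 with rfl | ht0
    · exact dvd_zero z
    · exact (ValuationRing.dvd_total t z).resolve_left fun htz => ht ⟨ht0, htz⟩
  obtain ⟨u, rfl⟩ := dvd_of_not_dvd hxz
  obtain ⟨w, rfl⟩ := dvd_of_not_dvd hyz
  rcases eq_or_ne z 0 with rfl | hz0
  · exact ⟨0, 0, map_zero _, by simp [zChart]⟩
  have huw : u * w = z := mul_left_cancel₀ (pow_ne_zero 2 hz0) (by linear_combination h)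
  -- if `w` were a unit, `y = z * w` would divide `z`
  have hw : PowerSeries.constantCoeff w = 0 := by
    by_contra hw
    have hwu : IsUnit w := PowerSeries.isUnit_iff_constantCoeff.mpr (isUnit_iff_ne_zero.mpr hw)
    exact hyz ⟨mul_ne_zero hz0 hwu.ne_zero, ⟨↑hwu.unit⁻¹, by simp [mul_assoc]⟩⟩
  subst huw
  refine ⟨u, w, hw, ?_⟩
  funext j
  fin_cases j <;> simp [zChart] <;> ring

end Charts

section A2

variable (k)

-- The generic arc `(a, a²b³, ab)`; writing `a = t·u` forces `a(0) = 0`.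
def xComponent : Ideal (MvPolynomial (Fin 3 × ℕ) k) :=
  RingHom.ker (arcEval (xChart (PowerSeries.X * genericSeries k (0 : Fin 2)) (genericSeries k 1)))

def yComponent : Ideal (MvPolynomial (Fin 3 × ℕ) k) :=
  RingHom.ker (arcEval (yChart (PowerSeries.X * genericSeries k (0 : Fin 2)) (genericSeries k 1)))

def zComponent : Ideal (MvPolynomial (Fin 3 × ℕ) k) :=
  RingHom.ker (arcEval (zChart (genericSeries k (0 : Fin 2)) (PowerSeries.X * genericSeries k 1)))

variable {k} {T : Type*} [CommRing T] [Algebra k T]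

lemma arcFiberIdeal_A2_le_ker_arcEval_iff (s : Fin 3 → T⟦X⟧) :
    arcFiberIdeal (Ideal.span {X 0 * X 1 - X 2 ^ 3}) ≤ RingHom.ker (arcEval (k := k) s) ↔
      s 0 * s 1 = s 2 ^ 3 ∧ ∀ j, PowerSeries.constantCoeff (s j) = 0 := by
  rw [arcFiberIdeal_le_ker_arcEval_iff, Ideal.span_singleton_le_iff_mem, RingHom.mem_ker]
  simp [sub_eq_zero]

lemma xComponent_le_ker_arcEval {a : T⟦X⟧} (ha : PowerSeries.constantCoeff a = 0) (b : T⟦X⟧) :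
    xComponent k ≤ RingHom.ker (arcEval (k := k) (xChart a b)) := by
  obtain ⟨u, rfl⟩ := PowerSeries.X_dvd_iff.mpr ha
  refine (ker_arcEval_le_ker_arcEval_map (arcEval ![u, b])
    (xChart (PowerSeries.X * genericSeries k (0 : Fin 2)) (genericSeries k 1))).trans_eq ?_
  congr 2
  funext j
  fin_cases j <;> simp [xChart]

lemma yComponent_le_ker_arcEval {a : T⟦X⟧} (ha : PowerSeries.constantCoeff a = 0) (b : T⟦X⟧) :
    yComponent k ≤ RingHom.ker (arcEval (k := k) (yChart a b)) := by
  obtain ⟨u, rfl⟩ := PowerSeries.X_dvd_iff.mpr ha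
  refine (ker_arcEval_le_ker_arcEval_map (arcEval ![u, b])
    (yChart (PowerSeries.X * genericSeries k (0 : Fin 2)) (genericSeries k 1))).trans_eq ?_
  congr 2
  funext j
  fin_cases j <;> simp [yChart]

lemma zComponent_le_ker_arcEval (a : T⟦X⟧) {b : T⟦X⟧} (hb : PowerSeries.constantCoeff b = 0) :
    zComponent k ≤ RingHom.ker (arcEval (k := k) (zChart a b)) := by
  obtain ⟨w, rfl⟩ := PowerSeries.X_dvd_iff.mpr hb
  refine (ker_arcEval_le_ker_arcEval_map (arcEval ![a, w])
    (zChart (genericSeries k (0 : Fin 2)) (PowerSeries.X * genericSeries k 1))).trans_eq ?_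
  congr 2
  funext j
  fin_cases j <;> simp [zChart]

variable [IsDomain k]

instance : (xComponent k).IsPrime := RingHom.ker_isPrime _

instance : (yComponent k).IsPrime := RingHom.ker_isPrime _

lemma xComponent_le_zComponent : xComponent k ≤ zComponent k := by
  let K := FractionRing (MvPolynomial (Fin 2 × ℕ) k)
  let ι : MvPolynomial (Fin 2 × ℕ) k →ₐ[k] K := IsScalarTower.toAlgHom k _ K
  set u := PowerSeries.map (ι : _ →+* K) (genericSeries k (0 : Fin 2))
  set w := PowerSeries.map (ι : _ →+* K) (PowerSeries.X * genericSeries k (1 : Fin 2))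
  have hu : IsUnit u := by
    rw [PowerSeries.isUnit_iff_constantCoeff, isUnit_iff_ne_zero]
    simp [u, genericSeries, ← PowerSeries.coeff_zero_eq_constantCoeff, ι]
  obtain ⟨u', hu'⟩ := hu.exists_right_inv
  have hz : zComponent k = RingHom.ker (arcEval (k := k) (zChart u w)) := by
    have hcomp : ι.comp (arcEval (zChart (genericSeries k (0 : Fin 2))
        (PowerSeries.X * genericSeries k 1))) = arcEval (zChart u w) := by
      rw [comp_arcEval]
      congr 1
      funext j
      fin_cases j <;> simp [zChart, u, w]
    ext p
    rw [zComponent, RingHom.mem_ker, RingHom.mem_ker, ← hcomp, AlgHom.comp_apply,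
      map_eq_zero_iff ι (IsFractionRing.injective _ K)]
  rw [hz, zChart_eq_xChart hu']
  exact xComponent_le_ker_arcEval (by simp [w]) _

lemma xComponent_le_or_yComponent_le (Q : Ideal (MvPolynomial (Fin 3 × ℕ) k)) [Q.IsPrime]
    (hQ : arcFiberIdeal (Ideal.span {X 0 * X 1 - X 2 ^ 3}) ≤ Q) :
    xComponent k ≤ Q ∨ yComponent k ≤ Q := by
  let φ : MvPolynomial (Fin 3 × ℕ) k →ₐ[k] Q.ResidueField := IsScalarTower.toAlgHom k _ _
  have hφ : RingHom.ker φ = Q := Q.ker_algebraMap_residueField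
  obtain ⟨s, hs⟩ : ∃ s : Fin 3 → Q.ResidueField⟦X⟧, arcEval s = φ :=
    ⟨_, arcEval_map_genericSeries φ⟩
  rw [← hφ, ← hs] at hQ ⊢
  obtain ⟨hrel, h0⟩ := (arcFiberIdeal_A2_le_ker_arcEval_iff s).mp hQ
  have hs3 : s = ![s 0, s 1, s 2] := by
    funext j
    fin_cases j <;> rfl
  rw [hs3]
  rcases exists_chart_of_mul_eq_pow_three (h0 0) (h0 1) hrel with
    ⟨a, b, ha, hab⟩ | ⟨a, b, ha, hab⟩ | ⟨a, b, hb, hab⟩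
  · exact Or.inl (hab ▸ xComponent_le_ker_arcEval ha b)
  · exact Or.inr (hab ▸ yComponent_le_ker_arcEval ha b)
  · exact Or.inl (hab ▸ xComponent_le_zComponent.trans (zComponent_le_ker_arcEval a hb))

lemma not_xComponent_le_yComponent : ¬xComponent k ≤ yComponent k := by
  intro h
  have hmem : (X (1, 1) : MvPolynomial (Fin 3 × ℕ) k) ∈ xComponent k := by
    simp [xComponent, xChart, mul_pow, mul_assoc, PowerSeries.coeff_X_pow_mul']
  simpa [yComponent, yChart, genericSeries] using h hmem

lemma not_yComponent_le_xComponent : ¬yComponent k ≤ xComponent k := by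
  intro h
  have hmem : (X (0, 1) : MvPolynomial (Fin 3 × ℕ) k) ∈ yComponent k := by
    simp [yComponent, yChart, mul_pow, mul_assoc, PowerSeries.coeff_X_pow_mul']
  simpa [xComponent, xChart, genericSeries] using h hmem

lemma minimalPrimes_arcFiberIdeal_A2 :
    (arcFiberIdeal (Ideal.span {X 0 * X 1 - X 2 ^ 3})).minimalPrimes =
      {xComponent k, yComponent k} := by
  refine Ideal.minimalPrimes_eq_pair ?_ ?_ not_xComponent_le_yComponent
    not_yComponent_le_xComponent xComponent_le_or_yComponent_le
  · refine (arcFiberIdeal_A2_le_ker_arcEval_iff _).mpr ⟨by simp [xChart]; ring, fun j => ?_⟩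
    fin_cases j <;> simp [xChart]
  · refine (arcFiberIdeal_A2_le_ker_arcEval_iff _).mpr ⟨by simp [yChart]; ring, fun j => ?_⟩
    fin_cases j <;> simp [yChart]

end A2

end

theorem arc_fiber_A2_two_components_general (k : Type*) [Field k] :
    ∃ C₁ C₂ : Set (PrimeSpectrum
      (ArcAlgebra (Ideal.span {(MvPolynomial.X 0 * MvPolynomial.X 1 -
          MvPolynomial.X 2 ^ 3 : MvPolynomial (Fin 3) k)}) ⧸
        Ideal.span {a : ArcAlgebra (Ideal.span {(MvPolynomial.X 0 * MvPolynomial.X 1 -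
            MvPolynomial.X 2 ^ 3 : MvPolynomial (Fin 3) k)}) |
          ∃ j : Fin 3, a = Ideal.Quotient.mk _ (MvPolynomial.X (j, (0 : ℕ)))})),
      C₁ ≠ C₂ ∧
      irreducibleComponents (PrimeSpectrum
        (ArcAlgebra (Ideal.span {(MvPolynomial.X 0 * MvPolynomial.X 1 -
            MvPolynomial.X 2 ^ 3 : MvPolynomial (Fin 3) k)}) ⧸
          Ideal.span {a : ArcAlgebra (Ideal.span {(MvPolynomial.X 0 * MvPolynomial.X 1 -
              MvPolynomial.X 2 ^ 3 : MvPolynomial (Fin 3) k)}) |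
            ∃ j : Fin 3, a = Ideal.Quotient.mk _ (MvPolynomial.X (j, (0 : ℕ)))})) =
        {C₁, C₂} := by
  refine Set.ncard_eq_two.mp ?_
  rw [ncard_irreducibleComponents_eq_ncard_minimalPrimes_ker
      (f := (Ideal.Quotient.mk _).comp (Ideal.Quotient.mk _))
      (Ideal.Quotient.mk_surjective.comp Ideal.Quotient.mk_surjective),
    ker_mk_comp_mk_eq_arcFiberIdeal, minimalPrimes_arcFiberIdeal_A2]
  exact Set.ncard_pair fun h => not_xComponent_le_yComponent h.le

/-- **Arc fiber of the A₂ singularity.**  Let `k` be algebraically closed of characteristic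
zero and `f = x·y − z³ ∈ k[x,y,z]`.  The set of arcs on `V(f)` through the origin — the prime
spectrum of the quotient of the arc algebra `A∞((f))` by the ideal generated by the images of
`x⁽⁰⁾, y⁽⁰⁾, z⁽⁰⁾` — has exactly two irreducible components. -/
theorem arc_fiber_A2_two_components (k : Type*) [Field k] [IsAlgClosed k] [CharZero k] :
    ∃ C₁ C₂ : Set (PrimeSpectrum
      (ArcAlgebra (Ideal.span {(MvPolynomial.X 0 * MvPolynomial.X 1 -
          MvPolynomial.X 2 ^ 3 : MvPolynomial (Fin 3) k)}) ⧸
        Ideal.span {a : ArcAlgebra (Ideal.span {(MvPolynomial.X 0 * MvPolynomial.X 1 -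
            MvPolynomial.X 2 ^ 3 : MvPolynomial (Fin 3) k)}) |
          ∃ j : Fin 3, a = Ideal.Quotient.mk _ (MvPolynomial.X (j, (0 : ℕ)))})),
      C₁ ≠ C₂ ∧
      irreducibleComponents (PrimeSpectrum
        (ArcAlgebra (Ideal.span {(MvPolynomial.X 0 * MvPolynomial.X 1 -
            MvPolynomial.X 2 ^ 3 : MvPolynomial (Fin 3) k)}) ⧸
          Ideal.span {a : ArcAlgebra (Ideal.span {(MvPolynomial.X 0 * MvPolynomial.X 1 -
              MvPolynomial.X 2 ^ 3 : MvPolynomial (Fin 3) k)}) |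
            ∃ j : Fin 3, a = Ideal.Quotient.mk _ (MvPolynomial.X (j, (0 : ℕ)))})) =
        {C₁, C₂} :=
  arc_fiber_A2_two_components_general k
end

section
/- A thin irreducible component for the Whitney umbrella: Let k be an algebraically closed field of characteristic zero and let f = x·y² − z² ∈ MvPolynomial (Fin 3) k, with the three variables denoted x, y, z. Let A be the arc-fiber algebra at the origin, i.e. the quotient of the arc algebra A∞((f)) by the ideal generated by the images of x^{(0)}, y^{(0)}, z^{(0)}. Then the ideal of A generated by the images of all the variables y^{(i)} and z^{(i)} (for all i ∈ ℕ) is a minimal prime of A. (Equivalently: the set of arcs lying in the singular axis y = z = 0 and passing through the origin is an irreducible component of the set of arcs on the Whitney umbrella through the origin.) -/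
/-!
Over a domain `D`, a `D`-point of the arc algebra of `x y² = z²` whose coordinates satisfy
`x⁽⁰⁾ = 0 ≠ x⁽¹⁾` is an arc `(x(t), y(t), z(t))` in `D⟦t⟧` with `x y² = z²` and `ord x = 1`.
If `y ≠ 0`, then `ord (x y²) = 1 + 2 ord y` is odd while `ord z²` is even, so `y = z = 0`.
Now let `Q` be the ideal generated by the `x⁽⁰⁾, y⁽ⁱ⁾, z⁽ⁱ⁾`, a prime containing the
defining ideal of the fiber. A prime `P` with `fiber ideal ⊆ P ⊆ Q` contains `x⁽⁰⁾` but
not `x⁽¹⁾`, so applying the above to `D = k[x⁽ⁱ⁾, y⁽ⁱ⁾, z⁽ⁱ⁾] / P` gives `Q ⊆ P`.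
-/

open MvPolynomial

namespace MvPolynomial

theorem isPrime_span_X_image {σ R : Type*} [CommRing R] [IsDomain R] (s : Set σ) :
    (Ideal.span (X '' s : Set (MvPolynomial σ R))).IsPrime := by
  classical
  set I := Ideal.span (X '' s : Set (MvPolynomial σ R))
  let ρ : MvPolynomial σ R →ₐ[R] MvPolynomial σ R := aeval fun i => if i ∈ s then 0 else X i
  have hρ : (Ideal.Quotient.mkₐ R I).comp ρ = Ideal.Quotient.mkₐ R I := by
    refine algHom_ext fun i => ?_
    by_cases hi : i ∈ s
    · simpa [ρ, hi] using
        (Ideal.Quotient.eq_zero_iff_mem.mpr (Ideal.subset_span (Set.mem_image_of_mem X hi))).symm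
    · simp [ρ, hi]
  suffices RingHom.ker ρ = I from this ▸ RingHom.ker_isPrime ρ
  refine le_antisymm (fun g hg => ?_) (Ideal.span_le.mpr ?_)
  · rw [← Ideal.Quotient.eq_zero_iff_mem, ← Ideal.Quotient.mkₐ_eq_mk R, ← hρ]
    simp [(RingHom.mem_ker).mp hg]
  · rintro _ ⟨i, hi, rfl⟩
    simp [ρ, hi]

end MvPolynomial

namespace PowerSeries

theorem eq_zero_of_mul_sq_eq_sq {D : Type*} [CommRing D] [IsDomain D] {x y z : D⟦X⟧} {n : ℕ}
    (hx : x.order = (2 * n + 1 : ℕ)) (h : x * y ^ 2 = z ^ 2) : y = 0 ∧ z = 0 := by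
  suffices hy : y = 0 by
    subst hy
    exact ⟨rfl, pow_eq_zero_iff two_ne_zero |>.mp (by simpa using h.symm)⟩
  by_contra hy
  obtain ⟨a, ha⟩ := ENat.ne_top_iff_exists.mp (order_eq_top.not.mpr hy)
  have hord := congrArg order h
  rw [order_mul, order_pow, order_pow, hx, ← ha, nsmul_eq_mul, nsmul_eq_mul] at hord
  cases hz : z.order with
  | top => rw [hz] at hord; norm_cast at hord
  | coe b => rw [hz] at hord; norm_cast at hord; omega

end PowerSeries

section Arcs

variable {k D : Type*} [CommRing k] [CommRing D] [Algebra k D] {n : ℕ}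

noncomputable def arcOf (φ : MvPolynomial (Fin n × ℕ) k →ₐ[k] D) : Fin n → PowerSeries D :=
  fun j => PowerSeries.mk fun i => φ (X (j, i))

theorem map_univArc (φ : MvPolynomial (Fin n × ℕ) k →ₐ[k] D) (g : MvPolynomial (Fin n) k) :
    PowerSeries.map φ (univArc k n g) = aeval (arcOf φ) g := by
  change (PowerSeries.mapAlgHom φ).comp (univArc k n) g = _
  congr 1
  refine algHom_ext fun j => ?_
  ext i
  simp [univArc, arcOf, PowerSeries.mapAlgHom_apply]

theorem arcIdeal_le_ker_iff {I : Ideal (MvPolynomial (Fin n) k)}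
    {φ : MvPolynomial (Fin n × ℕ) k →ₐ[k] D} :
    arcIdeal I ≤ RingHom.ker φ ↔ I ≤ RingHom.ker (aeval (arcOf φ)) := by
  rw [arcIdeal, Ideal.span_le]
  constructor
  · intro h g hg
    ext i
    rw [← map_univArc, PowerSeries.coeff_map, map_zero]
    exact h ⟨g, hg, i, rfl⟩
  · rintro h _ ⟨g, hg, i, rfl⟩
    have := congrArg (PowerSeries.coeff i) (RingHom.mem_ker.mp (h hg))
    rwa [← map_univArc, PowerSeries.coeff_map, map_zero] at this

end Arcs

theorem DoubleQuot.map_quotQuotMk_mem_minimalPrimes {R : Type*} [CommRing R] {I J Q : Ideal R}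
    (hQ : Q ∈ (I ⊔ J).minimalPrimes) :
    Q.map (quotQuotMk I J) ∈ minimalPrimes ((R ⧸ I) ⧸ J.map (Ideal.Quotient.mk I)) := by
  have h := Ideal.minimalPrimes_map_of_surjective (f := quotQuotMk I J)
    (Ideal.Quotient.mk_surjective.comp Ideal.Quotient.mk_surjective) ⊥
  rw [Ideal.map_bot, bot_sup_eq, ker_quotQuotMk] at h
  change _ ∈ (⊥ : Ideal _).minimalPrimes
  exact h ▸ ⟨Q, hQ, rfl⟩

section WhitneyUmbrella

variable (k : Type*) [CommRing k]

noncomputable def whitneyUmbrella : MvPolynomial (Fin 3) k := X 0 * X 1 ^ 2 - X 2 ^ 2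

noncomputable def originArcIdeal : Ideal (MvPolynomial (Fin 3 × ℕ) k) :=
  Ideal.span (Set.range fun j => X (j, 0))

/-- The ideal of the arcs through the origin that lie in the singular axis `y = z = 0`. -/
noncomputable def axisArcIdeal : Ideal (MvPolynomial (Fin 3 × ℕ) k) :=
  Ideal.span (X '' {p | p.2 = 0 ∨ p.1 ≠ 0})

variable {k}

theorem whitneyUmbrella_X_mem_of_arcIdeal_le {P : Ideal (MvPolynomial (Fin 3 × ℕ) k)}
    [P.IsPrime] (harc : arcIdeal (Ideal.span {whitneyUmbrella k}) ≤ P) (h₀ : X (0, 0) ∈ P)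
    (h₁ : X (0, 1) ∉ P) {j : Fin 3} (hj : j ≠ 0) (i : ℕ) : X (j, i) ∈ P := by
  set φ := Ideal.Quotient.mkₐ k P
  have hφ : ∀ p, φ (X p) = 0 ↔ X p ∈ P := fun p => Ideal.Quotient.eq_zero_iff_mem
  have hker : RingHom.ker φ = P := Ideal.Quotient.mkₐ_ker k P
  have hrel : arcOf φ 0 * arcOf φ 1 ^ 2 = arcOf φ 2 ^ 2 := by
    rw [← hker, arcIdeal_le_ker_iff, Ideal.span_singleton_le_iff_mem,
      RingHom.mem_ker] at harc
    simpa [whitneyUmbrella, sub_eq_zero] using harc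
  have hx : (arcOf φ 0).order = (2 * 0 + 1 : ℕ) := by
    rw [PowerSeries.order_eq_nat]
    refine ⟨by simpa [arcOf, hφ] using h₁, fun i hi => ?_⟩
    obtain rfl : i = 0 := by omega
    simpa [arcOf, hφ] using h₀
  obtain ⟨hy, hz⟩ := PowerSeries.eq_zero_of_mul_sq_eq_sq hx hrel
  obtain rfl | rfl : j = 1 ∨ j = 2 := by omega
  · simpa [arcOf, hφ] using congrArg (PowerSeries.coeff i) hy
  · simpa [arcOf, hφ] using congrArg (PowerSeries.coeff i) hz

theorem axisArcIdeal_mem_minimalPrimes [IsDomain k] :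
    axisArcIdeal k ∈ (arcIdeal (Ideal.span {whitneyUmbrella k}) ⊔ originArcIdeal k).minimalPrimes := by
  have hmem : ∀ p : Fin 3 × ℕ, p.2 = 0 ∨ p.1 ≠ 0 → X p ∈ axisArcIdeal k :=
    fun p hp => Ideal.subset_span ⟨p, hp, rfl⟩
  have hprime : (axisArcIdeal k).IsPrime := isPrime_span_X_image _
  have harc : arcIdeal (Ideal.span {whitneyUmbrella k}) ≤ axisArcIdeal k := by
    have hker : RingHom.ker (Ideal.Quotient.mkₐ k (axisArcIdeal k)) = axisArcIdeal k :=
      Ideal.Quotient.mkₐ_ker k _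
    have hyz : ∀ j : Fin 3, j ≠ 0 → arcOf (Ideal.Quotient.mkₐ k (axisArcIdeal k)) j = 0 :=
      fun j hj => PowerSeries.ext fun i => by
        simpa [arcOf, Ideal.Quotient.eq_zero_iff_mem] using hmem (j, i) (Or.inr hj)
    rw [← hker, arcIdeal_le_ker_iff, Ideal.span_singleton_le_iff_mem, RingHom.mem_ker]
    simp [whitneyUmbrella, hyz 1 one_ne_zero, hyz 2 (by decide)]
  refine ⟨⟨hprime, sup_le harc ?_⟩, fun P ⟨hP, hle⟩ hPQ => Ideal.span_le.mpr ?_⟩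
  · exact Ideal.span_le.mpr (Set.range_subset_iff.mpr fun j => hmem (j, 0) (Or.inl rfl))
  · have h₀ : ∀ j, X (j, 0) ∈ P := fun j => hle (Ideal.mem_sup_right (Ideal.subset_span ⟨j, rfl⟩))
    have h₁ : X (0, 1) ∉ P := fun h => by
      obtain ⟨p, hp, hne⟩ := mem_ideal_span_X_image.mp (hPQ h) (Finsupp.single (0, 1) 1)
        (by simp [X])
      obtain rfl : p = (0, 1) := by simpa [Finsupp.single_apply, eq_comm] using hne
      simp at hp
    rintro _ ⟨⟨j, i⟩, hp | hj, rfl⟩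
    · obtain rfl : i = 0 := hp
      exact h₀ j
    · exact whitneyUmbrella_X_mem_of_arcIdeal_le (le_sup_left.trans hle) (h₀ 0) h₁ hj i

theorem map_quotQuotMk_axisArcIdeal (I : Ideal (MvPolynomial (Fin 3 × ℕ) k)) :
    (axisArcIdeal k).map (DoubleQuot.quotQuotMk I (originArcIdeal k)) =
      Ideal.span {a | ∃ i : ℕ, a = DoubleQuot.quotQuotMk I (originArcIdeal k) (X (1, i)) ∨
        a = DoubleQuot.quotQuotMk I (originArcIdeal k) (X (2, i))} := by
  set π := DoubleQuot.quotQuotMk I (originArcIdeal k)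
  have h₀ : ∀ j, π (X (j, 0)) = 0 := fun j => by
    rw [← RingHom.mem_ker, DoubleQuot.ker_quotQuotMk]
    exact Ideal.mem_sup_right (Ideal.subset_span ⟨j, rfl⟩)
  rw [axisArcIdeal, Ideal.map_span π]
  apply le_antisymm <;> rw [Ideal.span_le]
  · rintro _ ⟨_, ⟨⟨j, i⟩, hi | hj, rfl⟩, rfl⟩
    · obtain rfl : i = 0 := hi
      simp [h₀]
    · obtain rfl | rfl : j = 1 ∨ j = 2 := by simp only at hj; omega
      · exact Ideal.subset_span ⟨i, Or.inl rfl⟩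
      · exact Ideal.subset_span ⟨i, Or.inr rfl⟩
  · rintro _ ⟨i, rfl | rfl⟩
    · exact Ideal.subset_span ⟨X (1, i), ⟨(1, i), Or.inr (by simp), rfl⟩, rfl⟩
    · exact Ideal.subset_span ⟨X (2, i), ⟨(2, i), Or.inr (by simp), rfl⟩, rfl⟩

end WhitneyUmbrella

theorem whitney_umbrella_thin_component_general (k : Type*) [Field k]
    (f : MvPolynomial (Fin 3) k)
    (hf : f = MvPolynomial.X 0 * MvPolynomial.X 1 ^ 2 - MvPolynomial.X 2 ^ 2)
    (O : Ideal (ArcAlgebra (Ideal.span {f})))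
    (hO : O = Ideal.span {a | ∃ j : Fin 3,
      a = Ideal.Quotient.mk (arcIdeal (Ideal.span {f})) (MvPolynomial.X (j, (0 : ℕ)))}) :
    Ideal.span {a : ArcAlgebra (Ideal.span {f}) ⧸ O | ∃ i : ℕ,
        a = Ideal.Quotient.mk O (Ideal.Quotient.mk (arcIdeal (Ideal.span {f}))
              (MvPolynomial.X ((1 : Fin 3), i))) ∨
        a = Ideal.Quotient.mk O (Ideal.Quotient.mk (arcIdeal (Ideal.span {f}))
              (MvPolynomial.X ((2 : Fin 3), i)))} ∈
      minimalPrimes (ArcAlgebra (Ideal.span {f}) ⧸ O) := by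
  obtain rfl : f = whitneyUmbrella k := hf
  obtain rfl : O = (originArcIdeal k).map (Ideal.Quotient.mk _) := by
    rw [hO, originArcIdeal, Ideal.map_span, ← Set.range_comp]
    congr 1
    ext
    simp [eq_comm]
  exact map_quotQuotMk_axisArcIdeal (arcIdeal (Ideal.span {whitneyUmbrella k})) ▸
    DoubleQuot.map_quotQuotMk_mem_minimalPrimes axisArcIdeal_mem_minimalPrimes

/-- **A thin irreducible component for the Whitney umbrella.**  Let `k` be algebraically
closed of characteristic zero and `f = x·y² − z² ∈ k[x,y,z]`.  In the arc-fiber algebra `A`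
at the origin (the quotient of `A∞((f))` by the ideal generated by the images of
`x⁽⁰⁾, y⁽⁰⁾, z⁽⁰⁾`), the ideal generated by the images of all variables `y⁽ⁱ⁾` and `z⁽ⁱ⁾` is
a minimal prime: the set of arcs lying in the singular axis `y = z = 0` through the origin
is an irreducible component of the set of arcs on the Whitney umbrella through the origin. -/
theorem whitney_umbrella_thin_component (k : Type*) [Field k] [IsAlgClosed k] [CharZero k]
    (f : MvPolynomial (Fin 3) k)
    (hf : f = MvPolynomial.X 0 * MvPolynomial.X 1 ^ 2 - MvPolynomial.X 2 ^ 2)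
    (O : Ideal (ArcAlgebra (Ideal.span {f})))
    (hO : O = Ideal.span {a | ∃ j : Fin 3,
      a = Ideal.Quotient.mk (arcIdeal (Ideal.span {f})) (MvPolynomial.X (j, (0 : ℕ)))}) :
    Ideal.span {a : ArcAlgebra (Ideal.span {f}) ⧸ O | ∃ i : ℕ,
        a = Ideal.Quotient.mk O (Ideal.Quotient.mk (arcIdeal (Ideal.span {f}))
              (MvPolynomial.X ((1 : Fin 3), i))) ∨
        a = Ideal.Quotient.mk O (Ideal.Quotient.mk (arcIdeal (Ideal.span {f}))
              (MvPolynomial.X ((2 : Fin 3), i)))} ∈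
      minimalPrimes (ArcAlgebra (Ideal.span {f}) ⧸ O) :=
  whitney_umbrella_thin_component_general k f hf O hO
end

section
/- Components of the 3-jet fiber of the Whitney umbrella: Let k be a field of characteristic zero and let k[x', y', z', x'', y'', z'', x''', y''', z'''] be a polynomial ring in nine variables (MvPolynomial over Fin 9 with the variables so named). Then the radical of the ideal generated by (z')² and x'·(y')² − 2·z'·z'' equals the intersection of the ideal generated by x' and z' with the ideal generated by y' and z'. (Equivalently: the reduced fiber of the third jet scheme of the Whitney umbrella x y² = z² over the origin decomposes as V(x', z') ∪ V(y', z').) -/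
open MvPolynomial

lemma ker_aeval_span_pair {k : Type*} [CommRing k] (a b : Fin 9)
    (u : Fin 9 → MvPolynomial (Fin 9) k)
    (hua : u a = 0) (hub : u b = 0)
    (h : ∀ i, i ≠ a → i ≠ b → u i = X i) :
    RingHom.ker (aeval u : MvPolynomial (Fin 9) k →ₐ[k] MvPolynomial (Fin 9) k) =
      Ideal.span {X a, X b} := by
  have key : ∀ f : MvPolynomial (Fin 9) k,
      f - aeval u f ∈ Ideal.span {(X a : MvPolynomial (Fin 9) k), X b} := by
    intro f
    induction f using MvPolynomial.induction_on with
    | C r => simp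
    | add p q hp hq =>
        have e : p + q - aeval u (p + q) =
            (p - aeval u p) + (q - aeval u q) := by
          simp only [map_add]; ring
        rw [e]; exact add_mem hp hq
    | mul_X p i hp =>
        by_cases hia : i = a
        · have hui : u i = 0 := hia ▸ hua
          have e : p * X i - aeval u (p * X i) = p * X i := by
            simp [hui]
          rw [e]
          exact Ideal.mul_mem_left _ _ (Ideal.subset_span (by simp [hia]))
        · by_cases hib : i = b
          · have hui : u i = 0 := hib ▸ hub
            have e : p * X i - aeval u (p * X i) = p * X i := by
              simp [hui]
            rw [e]
            exact Ideal.mul_mem_left _ _ (Ideal.subset_span (by simp [hib]))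
          · have e : p * X i - aeval u (p * X i) =
                (p - aeval u p) * X i := by
              simp only [map_mul, aeval_X, h i hia hib]; ring
            rw [e]; exact Ideal.mul_mem_right _ _ hp
  refine le_antisymm (fun f hf => ?_) (Ideal.span_le.mpr ?_)
  · have := key f
    rw [RingHom.mem_ker] at hf
    rwa [hf, sub_zero] at this
  · rintro p hp
    simp only [Set.mem_insert_iff, Set.mem_singleton_iff] at hp
    rcases hp with rfl | rfl <;> simp [RingHom.mem_ker, hua, hub]

/-- **Components of the 3-jet fiber of the Whitney umbrella.**  In the polynomial ring
`k[x', y', z', x'', y'', z'', x''', y''', z''']` (the nine variables being, in order,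
`X 0 = x'`, `X 1 = y'`, `X 2 = z'`, `X 3 = x''`, `X 4 = y''`, `X 5 = z''`, `X 6 = x'''`,
`X 7 = y'''`, `X 8 = z'''`), the radical of the ideal generated by `(z')²` and
`x'·(y')² − 2·z'·z''` equals the intersection of the ideal `(x', z')` with the ideal
`(y', z')`: the reduced fiber of the third jet scheme of the Whitney umbrella `xy² = z²`
over the origin decomposes as `V(x',z') ∪ V(y',z')`. -/
theorem whitney_umbrella_jet3_fiber_components (k : Type*) [Field k] [CharZero k] :
    (Ideal.span {(X 2 ^ 2 : MvPolynomial (Fin 9) k),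
        X 0 * X 1 ^ 2 - 2 * X 2 * X 5}).radical =
      Ideal.span {(X 0 : MvPolynomial (Fin 9) k), X 2} ⊓
        Ideal.span {(X 1 : MvPolynomial (Fin 9) k), X 2} := by
  set S : Ideal (MvPolynomial (Fin 9) k) :=
    Ideal.span {X 2 ^ 2, X 0 * X 1 ^ 2 - 2 * X 2 * X 5} with hS
  set I : Ideal (MvPolynomial (Fin 9) k) := Ideal.span {X 0, X 2} with hI
  set J : Ideal (MvPolynomial (Fin 9) k) := Ideal.span {X 1, X 2} with hJ
  have hx0I : (X 0 : MvPolynomial (Fin 9) k) ∈ I := Ideal.subset_span (by simp)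
  have hx2I : (X 2 : MvPolynomial (Fin 9) k) ∈ I := Ideal.subset_span (by simp)
  have hx1J : (X 1 : MvPolynomial (Fin 9) k) ∈ J := Ideal.subset_span (by simp)
  have hx2J : (X 2 : MvPolynomial (Fin 9) k) ∈ J := Ideal.subset_span (by simp)
  have hg1 : (X 2 ^ 2 : MvPolynomial (Fin 9) k) ∈ S := Ideal.subset_span (by simp)
  have hg2 : (X 0 * X 1 ^ 2 - 2 * X 2 * X 5 : MvPolynomial (Fin 9) k) ∈ S :=
    Ideal.subset_span (by simp)
  -- z' is in the radical
  have hz : (X 2 : MvPolynomial (Fin 9) k) ∈ S.radical := ⟨2, hg1⟩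
  -- x'·y' is in the radical
  have hxy : (X 0 * X 1 : MvPolynomial (Fin 9) k) ∈ S.radical := by
    rw [← Ideal.radical_idem]
    refine ⟨2, ?_⟩
    have e : (X 0 * X 1 : MvPolynomial (Fin 9) k) ^ 2 =
        X 0 * (X 0 * X 1 ^ 2 - 2 * X 2 * X 5) + (2 * X 0 * X 5) * X 2 := by ring
    rw [e]
    exact add_mem (Ideal.le_radical (Ideal.mul_mem_left _ _ hg2))
      (Ideal.mul_mem_left _ _ hz)
  -- the two ideals on the right are prime
  have hIprime : I.IsPrime := by
    rw [hI, ← ker_aeval_span_pair 0 2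
      (fun i => if i = 0 then 0 else if i = 2 then 0 else X i)
      (by simp) (by simp) (by intro i hi0 hi2; simp [hi0, hi2])]
    exact RingHom.ker_isPrime _
  have hJprime : J.IsPrime := by
    rw [hJ, ← ker_aeval_span_pair 1 2
      (fun i => if i = 1 then 0 else if i = 2 then 0 else X i)
      (by simp) (by simp) (by intro i hi1 hi2; simp [hi1, hi2])]
    exact RingHom.ker_isPrime _
  refine le_antisymm (le_inf ?_ ?_) ?_
  · rw [← hIprime.radical]
    refine Ideal.radical_mono (Ideal.span_le.mpr ?_)
    rintro p hp
    simp only [Set.mem_insert_iff, Set.mem_singleton_iff] at hp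
    rcases hp with rfl | rfl
    · rw [sq]; exact Ideal.mul_mem_left _ _ hx2I
    · refine sub_mem (Ideal.mul_mem_right _ _ hx0I) ?_
      rw [show (2 * X 2 * X 5 : MvPolynomial (Fin 9) k) = (2 * X 5) * X 2 by ring]
      exact Ideal.mul_mem_left _ _ hx2I
  · rw [← hJprime.radical]
    refine Ideal.radical_mono (Ideal.span_le.mpr ?_)
    rintro p hp
    simp only [Set.mem_insert_iff, Set.mem_singleton_iff] at hp
    rcases hp with rfl | rfl
    · rw [sq]; exact Ideal.mul_mem_left _ _ hx2J
    · refine sub_mem ?_ ?_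
      · rw [show (X 0 * X 1 ^ 2 : MvPolynomial (Fin 9) k) = (X 0 * X 1) * X 1 by ring]
        exact Ideal.mul_mem_left _ _ hx1J
      · rw [show (2 * X 2 * X 5 : MvPolynomial (Fin 9) k) = (2 * X 5) * X 2 by ring]
        exact Ideal.mul_mem_left _ _ hx2J
  · rintro f ⟨hfI, hfJ⟩
    obtain ⟨a, b, hab⟩ := Ideal.mem_span_pair.mp hfI
    obtain ⟨c, d, hcd⟩ := Ideal.mem_span_pair.mp hfJ
    rw [← Ideal.radical_idem]
    refine ⟨2, ?_⟩
    have e : f ^ 2 = (a * c) * (X 0 * X 1) + ((a * d * X 0 + b * c * X 1 + b * d * X 2) * X 2) := by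
      rw [sq]; nth_rw 1 [← hab]; rw [← hcd]; ring
    rw [e]
    exact add_mem (Ideal.mul_mem_left _ _ hxy) (Ideal.mul_mem_left _ _ hz)
end

section
/- First jet scheme of the p-fold Whitney umbrella: Let k be a field of characteristic p > 0 and consider the polynomial ring k[x, y, z, x', y', z'] in six variables (MvPolynomial over Fin 6 with the variables so named). Then the ideal generated by x·y^p − z^p and x'·y^p equals the intersection of the ideal generated by x·y^p − z^p and x' with the ideal generated by y^p and z^p. (This is the primary decomposition of the defining ideal of the first jet scheme of the hypersurface x y^p = z^p, exhibiting its two irreducible components V(x y^p − z^p, x') and V(y, z).) -/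
open MvPolynomial

/-- Substituting `0` for `X 3` changes a polynomial by a multiple of `X 3`. -/
lemma aux_X3_dvd {k : Type*} [Field k] (q : MvPolynomial (Fin 6) k) :
    (X 3 : MvPolynomial (Fin 6) k) ∣
      q - aeval (fun i => if i = 3 then 0 else X i) q := by
  induction q using MvPolynomial.induction_on with
  | C a => simp
  | add r s hr hs =>
      have := dvd_add hr hs
      convert this using 1
      simp only [map_add]
      ring
  | mul_X r i hr =>
      by_cases h : i = 3
      · subst h
        rw [map_mul, show (aeval fun i => if i = 3 then 0 else X i)
            (X 3 : MvPolynomial (Fin 6) k) = 0 by simp, mul_zero, sub_zero]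
        exact Dvd.intro_left _ rfl
      · simp only [map_mul, aeval_X, if_neg h]
        obtain ⟨w, hw⟩ := hr
        exact ⟨w * X i, by linear_combination (X i : MvPolynomial (Fin 6) k) * hw⟩

/-- **First jet scheme of the `p`-fold Whitney umbrella.**  Let `k` be a field of
characteristic `p > 0` and consider the polynomial ring `k[x, y, z, x', y', z']` (the six
variables being, in order, `X 0 = x`, `X 1 = y`, `X 2 = z`, `X 3 = x'`, `X 4 = y'`,
`X 5 = z'`).  Then the ideal `(x·y^p − z^p, x'·y^p)` equals the intersection of the ideal
`(x·y^p − z^p, x')` with the ideal `(y^p, z^p)`: this is the primary decomposition of the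
defining ideal of the first jet scheme of the hypersurface `x y^p = z^p`, exhibiting its two
irreducible components `V(x y^p − z^p, x')` and `V(y, z)`. -/
theorem p_fold_whitney_umbrella_first_jets (k : Type*) [Field k] (p : ℕ) [CharP k p]
    (hp : 0 < p) :
    Ideal.span {(X 0 * X 1 ^ p - X 2 ^ p : MvPolynomial (Fin 6) k), X 3 * X 1 ^ p} =
      Ideal.span {(X 0 * X 1 ^ p - X 2 ^ p : MvPolynomial (Fin 6) k), X 3} ⊓
        Ideal.span {(X 1 ^ p : MvPolynomial (Fin 6) k), X 2 ^ p} := by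
  set f : MvPolynomial (Fin 6) k := X 0 * X 1 ^ p - X 2 ^ p with hf
  apply le_antisymm
  · apply le_inf <;> rw [Ideal.span_le, Set.insert_subset_iff, Set.singleton_subset_iff]
    · exact ⟨Ideal.subset_span (Set.mem_insert _ _),
        (Ideal.mem_span_pair).2 ⟨0, X 1 ^ p, by ring⟩⟩
    · exact ⟨(Ideal.mem_span_pair).2 ⟨X 0, -1, by ring⟩,
        (Ideal.mem_span_pair).2 ⟨X 3, 0, by ring⟩⟩
  · intro g hg
    obtain ⟨hg1, hg2⟩ := hg
    simp only [SetLike.mem_coe] at hg1 hg2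
    rw [Ideal.mem_span_pair] at hg1 hg2 ⊢
    obtain ⟨a, b, hab⟩ := hg1
    obtain ⟨u, v, huv⟩ := hg2
    set φ : MvPolynomial (Fin 6) k →ₐ[k] MvPolynomial (Fin 6) k :=
      aeval (fun i => if i = 3 then 0 else X i) with hφdef
    set c : MvPolynomial (Fin 6) k := u + v * X 0 with hc
    set d : MvPolynomial (Fin 6) k := -(v + a) with hd
    have key : b * X 3 = c * X 1 ^ p + d * f := by
      rw [hc, hd, hf]; linear_combination hab - huv
    have hφY : φ (X 1 ^ p : MvPolynomial (Fin 6) k) = X 1 ^ p := by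
      simp [hφdef]
    have hφf : φ f = f := by simp [hφdef, hf]
    have hφ0 : φ c * X 1 ^ p + φ d * f = 0 := by
      have := congrArg φ key
      simp only [map_mul, map_add] at this
      rw [hφY, hφf] at this
      have hX3 : φ (X 3 : MvPolynomial (Fin 6) k) = 0 := by simp [hφdef]
      rw [hX3, mul_zero] at this
      exact this.symm
    obtain ⟨c', hc'⟩ := aux_X3_dvd c
    obtain ⟨d', hd'⟩ := aux_X3_dvd d
    rw [← hφdef] at hc' hd'
    have hmul : X 3 * b = X 3 * (c' * X 1 ^ p + d' * f) := by
      linear_combination key + (X 1 ^ p : MvPolynomial (Fin 6) k) * hc' + f * hd' + hφ0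
    have hb : b = c' * X 1 ^ p + d' * f :=
      mul_left_cancel₀ (X_ne_zero 3) hmul
    exact ⟨a + d' * X 3, c', by linear_combination hab - (X 3 : MvPolynomial (Fin 6) k) * hb⟩
end

section
/- Failure of the curve selection lemma in the space of arcs (power-series form): Let K be a field and let (f_i)_{i ≥ 1} be a family of formal power series in PowerSeries K such that every f_i has constant coefficient 0 and f_1 = (f_i)^i for every i ≥ 2. Then f_i = 0 for all i ≥ 1. (Consequently, every morphism Spec K[[s]] → Spec k[x₁, x₂, …]/(x₁ − xᵢⁱ : i ≥ 2) sending the closed point to the origin is constant.) -/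
/-! A series without constant term is divisible by `X`, so its `i`-th power is divisible by `X ^ i`.
Hence `f 1` is divisible by every power of `X` and vanishes; then `f i ^ i = 0` forces `f i = 0`. -/

namespace PowerSeries

variable {R : Type*} [CommSemiring R]

theorem eq_zero_of_forall_X_pow_dvd {φ : R⟦X⟧} (h : ∀ n : ℕ, X ^ n ∣ φ) : φ = 0 := by
  ext m
  exact X_pow_dvd_iff.mp (h (m + 1)) m m.lt_succ_self

theorem X_pow_dvd_pow_of_coeff_zero_eq_zero {ψ : R⟦X⟧} (hψ : coeff 0 ψ = 0) (n : ℕ) :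
    X ^ n ∣ ψ ^ n :=
  pow_dvd_pow_of_dvd (X_dvd_iff.mpr (by rwa [← coeff_zero_eq_constantCoeff_apply])) n

end PowerSeries

/-- **Failure of the curve selection lemma in the space of arcs** (power-series form).
Let `K` be a field and `(f_i)_{i ≥ 1}` a family of formal power series over `K` such that
every `f_i` has constant coefficient `0` and `f_1 = (f_i)^i` for every `i ≥ 2`.  Then
`f_i = 0` for all `i ≥ 1`: the only arc through the origin on the scheme
`Spec k[x₁, x₂, …]/(x₁ − xᵢⁱ : i ≥ 2)` is the constant one. -/
theorem curve_selection_fails (K : Type*) [Field K] (f : ℕ → PowerSeries K)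
    (h0 : ∀ i : ℕ, 1 ≤ i → PowerSeries.coeff 0 (f i) = 0)
    (h1 : ∀ i : ℕ, 2 ≤ i → f 1 = (f i) ^ i) :
    ∀ i : ℕ, 1 ≤ i → f i = 0 := by
  have hf1 : f 1 = 0 := by
    refine PowerSeries.eq_zero_of_forall_X_pow_dvd fun n => ?_
    have hdvd := PowerSeries.X_pow_dvd_pow_of_coeff_zero_eq_zero (h0 (n + 2) (by omega)) (n + 2)
    rw [← h1 (n + 2) (by omega)] at hdvd
    exact (pow_dvd_pow PowerSeries.X (by omega)).trans hdvd
  intro i hi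
  obtain rfl | hi2 := hi.eq_or_lt
  · exact hf1
  · exact pow_eq_zero_iff (by omega) |>.mp ((h1 i hi2).symm.trans hf1)
end
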